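/- Let T = (Q, Σ, δ) be a complete and reversible S-automaton such that the generated semigroup S(T) = { q⃗∘ : q⃗ ∈ Q⁺ } is infinite. Then every word u ∈ Σ* is expandable: there exists x ∈ Σ* with |Q*∘ux| > |Q*∘u|. -/

import Mathlib

/-- An S-automaton: a deterministic, possibly partial, letter-to-letter transducer.
`δ q a = some (b, p)` means there is a transition q --a/b--> p. Determinism is built in. -/
structure SAut (Q A : Type) where
  δ : Q → A → Option (A × Q)

namespace SAut

variable {Q A : Type}

/-- The run of the automaton starting in `q` on input `u`: output word and end state. -/
def run (T : SAut Q A) (q : Q) : List A → Option (List A × Q)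
  | [] => some ([], q)
  | a :: as => (T.δ q a).bind fun bp => (T.run bp.2 as).map fun vr => (bp.1 :: vr.1, vr.2)

/-- The partial action `q ∘ u` of a single state on a word (the output of the run). -/
def act1 (T : SAut Q A) (q : Q) (u : List A) : Option (List A) := (T.run q u).map Prod.fst

/-- The dual action `q · u` of a word on a single state (the end state of the run). -/
def dual1 (T : SAut Q A) (q : Q) (u : List A) : Option Q := (T.run q u).map Prod.snd

/-- The partial action of a state sequence on a word; the head of the list acts first
(so the list `[q₁, q₂, …, q_ℓ]` represents the composition `q_ℓ ∘ ⋯ ∘ q₂ ∘ q₁`). -/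
def act (T : SAut Q A) : List Q → List A → Option (List A)
  | [], u => some u
  | q :: qs, u => (T.act1 q u).bind (T.act qs)

/-- The dual partial action of a word on a state sequence:
`ε · u = ε` and `(p⃗ q) · u = (p⃗ · (q ∘ u)) (q · u)` (head of the list acts first). -/
def dual (T : SAut Q A) : List Q → List A → Option (List Q)
  | [], _ => some []
  | q :: qs, u =>
      (T.act1 q u).bind fun v =>
        (T.dual1 q u).bind fun qd =>
          (T.dual qs v).map fun rest => qd :: rest

/-- The orbit `Q* ∘ u` of a word under the partial action of all state sequences. -/
def orbit (T : SAut Q A) (u : List A) : Set (List A) := { v | ∃ l : List Q, T.act l u = some v }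

/-- Completeness: every state has a transition for every input letter. -/
def Complete (T : SAut Q A) : Prop := ∀ q a, (T.δ q a).isSome

/-- Reversibility: every state has at most one incoming transition with a given input letter. -/
def Reversible (T : SAut Q A) : Prop :=
  ∀ p p' a b b' q, T.δ p a = some (b, q) → T.δ p' a = some (b', q) → p = p'

/-- Invertibility (inverse-determinism): for every state and output letter there is
at most one transition with that output letter. -/
def Invertible (T : SAut Q A) : Prop :=
  ∀ q a a' b p p', T.δ q a = some (b, p) → T.δ q a' = some (b, p') → a = a'

/-- The disjoint union of two automata over the same alphabet. -/
def union (T₁ T₂ : SAut Q A) : SAut (Q ⊕ Q) A where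
  δ s a := match s with
    | Sum.inl q => (T₁.δ q a).map fun bp => (bp.1, Sum.inl bp.2)
    | Sum.inr q => (T₂.δ q a).map fun bp => (bp.1, Sum.inr bp.2)

open Classical in
/-- The inverse automaton: swap input and output labels on every transition.
(For an invertible automaton this is the deterministic inverse automaton.) -/
noncomputable def inv (T : SAut Q A) : SAut Q A where
  δ q b := if h : ∃ ap : A × Q, T.δ q ap.1 = some (b, ap.2) then some h.choose else none

/-- The union `T ⊔ T̄` of an automaton with its inverse; its states are `Q̃ = Q ⊔ Q̄`. -/
noncomputable def tilde (T : SAut Q A) : SAut (Q ⊕ Q) A := T.union T.inv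

/-- `Stab¹(u)`: all state sequences (including the empty one) defined on `u` that fix `u`. -/
def stab1 (T : SAut Q A) (u : List A) : Set (List Q) := { l | T.act l u = some u }

/-- `Stab(u)`: all nonempty state sequences defined on `u` that fix `u`. -/
def stab (T : SAut Q A) (u : List A) : Set (List Q) := { l | l ≠ [] ∧ T.act l u = some u }

/-- The shifted stabilizer `Stab¹(u) · u` as a set of state sequences. -/
def stab1Shift (T : SAut Q A) (u : List A) : Set (List Q) :=
  { l' | ∃ l ∈ T.stab1 u, T.dual l u = some l' }

/-- The orbit `Stab¹(u) · u ∘ x` of `x` under the shifted stabilizer. -/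
def stab1ShiftOrbit (T : SAut Q A) (u x : List A) : Set (List A) :=
  { y | ∃ l' ∈ T.stab1Shift u, T.act l' x = some y }

/-- The shifted stabilizer `Stab(u) · u ∘` as a set of partial functions on words. -/
def shiftedStabFun (T : SAut Q A) (u : List A) : Set (List A → Option (List A)) :=
  { f | ∃ l ∈ T.stab u, ∃ l', T.dual l u = some l' ∧ f = T.act l' }

end SAut

namespace SAut

variable {Q A : Type}

theorem run_total' (T : SAut Q A) (hc : T.Complete) :
    ∀ (u : List A) (q : Q), ∃ v r, T.run q u = some (v, r) ∧ v.length = u.length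
  | [], q => ⟨[], q, rfl, rfl⟩
  | a :: as, q => by
    obtain ⟨⟨b, p⟩, hbp⟩ := Option.isSome_iff_exists.mp (hc q a)
    obtain ⟨v, r, hv, hl⟩ := run_total' T hc as p
    exact ⟨b :: v, r, by simp [run, hbp, hv], by simp [hl]⟩

theorem run_cons {T : SAut Q A} {q : Q} {a : A} {as v r}
    (h : T.run q (a :: as) = some (v, r)) :
    ∃ b p v', T.δ q a = some (b, p) ∧ T.run p as = some (v', r) ∧ v = b :: v' := by
  cases hδ : T.δ q a with
  | none => simp [run, hδ] at h
  | some bp =>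
    cases hr : T.run bp.2 as with
    | none => simp [run, hδ, hr] at h
    | some vr =>
      simp [run, hδ, hr] at h
      exact ⟨bp.1, bp.2, vr.1, by simpa using hδ, by rw [hr, ← h.2], h.1.symm⟩

theorem run_append' (T : SAut Q A) :
    ∀ (u : List A) (q : Q) {x v w r s}, T.run q u = some (v, r) → T.run r x = some (w, s) →
      T.run q (u ++ x) = some (v ++ w, s)
  | [], q, x, v, w, r, s, h1, h2 => by
    simp [run] at h1; obtain ⟨rfl, rfl⟩ := h1; simpa using h2
  | a :: as, q, x, v, w, r, s, h1, h2 => by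
    obtain ⟨b, p, v', hδ, hr, rfl⟩ := run_cons h1
    have := run_append' T as p hr h2
    simp [run, hδ, this]

theorem run_act1_dual1 {T : SAut Q A} {q : Q} {u v r} (h : T.run q u = some (v, r)) :
    T.act1 q u = some v ∧ T.dual1 q u = some r := by
  simp [act1, dual1, h]

theorem act1_dual1_run {T : SAut Q A} {q : Q} {u v r}
    (h1 : T.act1 q u = some v) (h2 : T.dual1 q u = some r) :
    T.run q u = some (v, r) := by
  cases hr : T.run q u with
  | none => simp [act1, hr] at h1
  | some vr =>
    simp [act1, hr] at h1
    simp [dual1, hr] at h2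
    simp [← h1, ← h2]

theorem act1_some_run {T : SAut Q A} {q : Q} {u v}
    (h1 : T.act1 q u = some v) : ∃ r, T.run q u = some (v, r) := by
  cases hr : T.run q u with
  | none => simp [act1, hr] at h1
  | some vr => simp [act1, hr] at h1; exact ⟨vr.2, by simp [← h1]⟩

theorem dual1_some_run {T : SAut Q A} {q : Q} {u r}
    (h1 : T.dual1 q u = some r) : ∃ v, T.run q u = some (v, r) := by
  cases hr : T.run q u with
  | none => simp [dual1, hr] at h1
  | some vr => simp [dual1, hr] at h1; exact ⟨vr.1, by simp [← h1]⟩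

theorem act1_total (T : SAut Q A) (hc : T.Complete) (q : Q) (u : List A) :
    ∃ v, T.act1 q u = some v ∧ v.length = u.length := by
  obtain ⟨v, r, h, hl⟩ := run_total' T hc u q
  exact ⟨v, (run_act1_dual1 h).1, hl⟩

theorem dual1_total (T : SAut Q A) (hc : T.Complete) (q : Q) (u : List A) :
    ∃ r, T.dual1 q u = some r := by
  obtain ⟨v, r, h, _⟩ := run_total' T hc u q
  exact ⟨r, (run_act1_dual1 h).2⟩

theorem act_total (T : SAut Q A) (hc : T.Complete) :
    ∀ (l : List Q) (u : List A), ∃ v, T.act l u = some v ∧ v.length = u.length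
  | [], u => ⟨u, rfl, rfl⟩
  | q :: qs, u => by
    obtain ⟨v1, h1, hl1⟩ := act1_total T hc q u
    obtain ⟨v, h, hl⟩ := act_total T hc qs v1
    exact ⟨v, by simp [act, h1, h], by omega⟩

theorem dual_total (T : SAut Q A) (hc : T.Complete) :
    ∀ (l : List Q) (u : List A), ∃ l', T.dual l u = some l' ∧ l'.length = l.length
  | [], _ => ⟨[], rfl, rfl⟩
  | q :: qs, u => by
    obtain ⟨v1, h1, _⟩ := act1_total T hc q u
    obtain ⟨r, h2⟩ := dual1_total T hc q u
    obtain ⟨rest, h3, hl⟩ := dual_total T hc qs v1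
    exact ⟨r :: rest, by simp [dual, h1, h2, h3], by simp [hl]⟩

theorem act_length (T : SAut Q A) (hc : T.Complete) {l : List Q} {u v : List A}
    (h : T.act l u = some v) : v.length = u.length := by
  obtain ⟨v', h', hl⟩ := act_total T hc l u
  rw [h] at h'; cases h'; exact hl

theorem act_append' (T : SAut Q A) :
    ∀ (l : List Q) {u x v l' w}, T.act l u = some v → T.dual l u = some l' →
      T.act l' x = some w → T.act l (u ++ x) = some (v ++ w)
  | [], u, x, v, l', w, h1, h2, h3 => by
    simp [act] at h1; simp [dual] at h2; subst h1; subst h2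
    simp [act] at h3; subst h3; rfl
  | q :: qs, u, x, v, l', w, h1, h2, h3 => by
    simp only [act, Option.bind_eq_some_iff] at h1
    obtain ⟨v1, hv1, hact⟩ := h1
    simp only [dual, Option.bind_eq_some_iff, Option.map_eq_some_iff] at h2
    obtain ⟨v1', hv1', r, hr, rest, hrest, rfl⟩ := h2
    rw [hv1] at hv1'; cases hv1'
    simp only [act, Option.bind_eq_some_iff] at h3
    obtain ⟨w1, hw1, hw⟩ := h3
    obtain ⟨s, hrun2⟩ := act1_some_run hw1
    have hrun := run_append' T u q (act1_dual1_run hv1 hr) hrun2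
    have := act_append' T qs hact hrest hw
    simp [act, (run_act1_dual1 hrun).1, this]

theorem dual_append' (T : SAut Q A) :
    ∀ (l : List Q) {u x l' l''}, T.dual l u = some l' → T.dual l' x = some l'' →
      T.dual l (u ++ x) = some l''
  | [], u, x, l', l'', h1, h2 => by
    simp [dual] at h1; subst h1; simpa [dual] using h2
  | q :: qs, u, x, l', l'', h1, h2 => by
    simp only [dual, Option.bind_eq_some_iff, Option.map_eq_some_iff] at h1
    obtain ⟨v1, hv1, r, hr, rest, hrest, rfl⟩ := h1
    simp only [dual, Option.bind_eq_some_iff, Option.map_eq_some_iff] at h2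
    obtain ⟨w1, hw1, s, hs, rest', hrest', rfl⟩ := h2
    obtain ⟨s', hrun2⟩ := act1_some_run hw1
    have hs' : s' = s := by
      have h := (run_act1_dual1 hrun2).2
      rw [hs] at h; exact Option.some_injective _ h.symm
    subst hs'
    have hrun := run_append' T u q (act1_dual1_run hv1 hr) hrun2
    have := dual_append' T qs hrest hrest'
    simp [dual, (run_act1_dual1 hrun).1, (run_act1_dual1 hrun).2, this]

theorem dual1_inj (T : SAut Q A) (hrev : T.Reversible) :
    ∀ (u : List A) {q q' : Q} {r}, T.dual1 q u = some r → T.dual1 q' u = some r → q = q'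
  | [], q, q', r, h1, h2 => by
    simp [dual1, run] at h1 h2; exact h1.trans h2.symm
  | a :: as, q, q', r, h1, h2 => by
    obtain ⟨v, hv⟩ := dual1_some_run h1
    obtain ⟨v', hv'⟩ := dual1_some_run h2
    obtain ⟨b, p, w, hδ, hrun, rfl⟩ := run_cons hv
    obtain ⟨b', p', w', hδ', hrun', rfl⟩ := run_cons hv'
    have hp : p = p' :=
      dual1_inj T hrev as (run_act1_dual1 hrun).2 (run_act1_dual1 hrun').2
    subst hp
    exact hrev q q' a b b' p hδ hδ'

theorem dual1_nil (T : SAut Q A) (q : Q) : T.dual1 q [] = some q := by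
  simp [dual1, run]

theorem act1_nil (T : SAut Q A) (q : Q) : T.act1 q [] = some [] := by
  simp [act1, run]

theorem dual_inj (T : SAut Q A) (hrev : T.Reversible) :
    ∀ (l l' : List Q) {u m}, T.dual l u = some m → T.dual l' u = some m → l = l'
  | [], [], u, m, _, _ => rfl
  | [], q' :: qs', u, m, h1, h2 => by
    simp only [dual] at h1; cases h1
    simp only [dual, Option.bind_eq_some_iff, Option.map_eq_some_iff] at h2
    obtain ⟨_, _, _, _, _, _, h⟩ := h2; exact absurd h (by simp)
  | q :: qs, [], u, m, h1, h2 => by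
    simp only [dual] at h2; cases h2
    simp only [dual, Option.bind_eq_some_iff, Option.map_eq_some_iff] at h1
    obtain ⟨_, _, _, _, _, _, h⟩ := h1; exact absurd h (by simp)
  | q :: qs, q' :: qs', u, m, h1, h2 => by
    simp only [dual, Option.bind_eq_some_iff, Option.map_eq_some_iff] at h1 h2
    obtain ⟨v1, hv1, r, hr, rest, hrest, rfl⟩ := h1
    obtain ⟨v1', hv1', r', hr', rest', hrest', heq⟩ := h2
    injection heq with h5 h6
    subst h5; subst h6
    have hq : q = q' := dual1_inj T hrev u hr hr'
    subst hq
    rw [hv1] at hv1'; cases hv1'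
    rw [dual_inj T hrev qs qs' hrest hrest']

theorem dual_nil (T : SAut Q A) : ∀ l : List Q, T.dual l [] = some l
  | [] => rfl
  | q :: qs => by simp [dual, act1_nil, dual1_nil, dual_nil T qs]


def pw (u : List A) : ℕ → List A
  | 0 => []
  | n + 1 => u ++ pw u n

theorem pw_one (u : List A) : pw u 1 = u := by simp [pw]

theorem pw_add (u : List A) : ∀ m n, pw u (m + n) = pw u m ++ pw u n
  | 0, n => by simp [pw, Nat.zero_add]
  | m + 1, n => by
    have e : m + 1 + n = (m + n) + 1 := by omega
    rw [e]; simp [pw, pw_add u m n]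

theorem exists_period (T : SAut Q A) [Fintype Q] (hc : T.Complete) (hrev : T.Reversible)
    (l : List Q) (u : List A) : ∃ m, 0 < m ∧ T.dual l (pw u m) = some l := by
  have htot : ∀ j : ℕ, ∃ g, T.dual l (pw u j) = some g ∧ g.length = l.length :=
    fun j => dual_total T hc l (pw u j)
  choose f hf hfl using htot
  have hmaps : Set.MapsTo f Set.univ {g : List Q | g.length = l.length} := fun j _ => hfl j
  obtain ⟨i, -, j, -, hij, hfij⟩ :=
    Set.infinite_univ.exists_ne_map_eq_of_mapsTo hmaps (List.finite_length_eq Q l.length)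
  wlog hlt : i < j generalizing i j
  · exact this j i hij.symm hfij.symm (by omega)
  obtain ⟨h, hh, -⟩ := dual_total T hc (f (j - i)) (pw u i)
  have h2 : T.dual l (pw u j) = some h := by
    have := dual_append' T l (hf (j - i)) hh
    rwa [← pw_add, Nat.sub_add_cancel (le_of_lt hlt)] at this
  have hhj : f j = h := Option.some_injective _ ((hf j).symm.trans h2)
  have hh' : T.dual (f (j - i)) (pw u i) = some (f i) := by rw [hh, ← hhj, ← hfij]
  have hl : l = f (j - i) := dual_inj T hrev l (f (j - i)) (hf i) hh'
  exact ⟨j - i, by omega, by rw [hf (j - i), ← hl]⟩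

theorem dual_pw_mul (T : SAut Q A) {l : List Q} {u : List A} {m : ℕ}
    (h : T.dual l (pw u m) = some l) : ∀ k, T.dual l (pw u (m * k)) = some l
  | 0 => by simpa [pw] using dual_nil T l
  | k + 1 => by
    have h2 := dual_append' T l (dual_pw_mul T h k) h
    rwa [← pw_add, show m * k + m = m * (k + 1) by ring] at h2

theorem step_lemma (T : SAut Q A) (hc : T.Complete) {p q : List Q} {u : List A} {p' q'}
    (hp : T.dual p u = some p') (hq : T.dual q u = some q')
    (h : ∀ x, T.act p x = T.act q x) (x : List A) : T.act p' x = T.act q' x := by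
  obtain ⟨v, hv, -⟩ := act_total T hc p u
  have hv' : T.act q u = some v := by rw [← h u]; exact hv
  obtain ⟨w, hw, -⟩ := act_total T hc p' x
  obtain ⟨w', hw', -⟩ := act_total T hc q' x
  have h1 := act_append' T p hv hp hw
  have h2 := act_append' T q hv' hq hw'
  rw [h (u ++ x), h2] at h1
  have h3 : v ++ w' = v ++ w := Option.some_injective _ h1
  have h4 : w' = w := by simpa using h3
  rw [hw, hw', h4]

theorem back_lemma (T : SAut Q A) [Fintype Q] (hc : T.Complete) (hrev : T.Reversible)
    {p q : List Q} {u : List A} {p' q'}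
    (hp : T.dual p u = some p') (hq : T.dual q u = some q')
    (h : ∀ x, T.act p' x = T.act q' x) : ∀ x, T.act p x = T.act q x := by
  obtain ⟨mp, hmp, hmp'⟩ := exists_period T hc hrev p u
  obtain ⟨mq, hmq, hmq'⟩ := exists_period T hc hrev q u
  have hpm : T.dual p (pw u (mp * mq)) = some p := dual_pw_mul T hmp' mq
  have hqm : T.dual q (pw u (mp * mq)) = some q := by
    have h2 := dual_pw_mul T hmq' mp
    rwa [Nat.mul_comm] at h2
  have claim : ∀ j pj qj, T.dual p (pw u (j + 1)) = some pj →
      T.dual q (pw u (j + 1)) = some qj → ∀ x, T.act pj x = T.act qj x := by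
    intro j
    induction j with
    | zero =>
      intro pj qj h1 h2
      rw [pw_one, hp] at h1; rw [pw_one, hq] at h2
      cases h1; cases h2
      exact h
    | succ j ih =>
      intro pj qj h1 h2
      obtain ⟨pj', hpj', -⟩ := dual_total T hc p (pw u (j + 1))
      obtain ⟨qj', hqj', -⟩ := dual_total T hc q (pw u (j + 1))
      obtain ⟨pj'', hpj'', -⟩ := dual_total T hc pj' u
      obtain ⟨qj'', hqj'', -⟩ := dual_total T hc qj' u
      have epw : pw u (j + 1) ++ u = pw u (j + 1 + 1) := by rw [pw_add u (j + 1) 1, pw_one]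
      have e1 : T.dual p (pw u (j + 1 + 1)) = some pj'' := by
        have h3 := dual_append' T p hpj' hpj''
        rwa [epw] at h3
      have e2 : T.dual q (pw u (j + 1 + 1)) = some qj'' := by
        have h3 := dual_append' T q hqj' hqj''
        rwa [epw] at h3
      have epj : pj = pj'' := Option.some_injective _ (h1.symm.trans e1)
      have eqj : qj = qj'' := Option.some_injective _ (h2.symm.trans e2)
      rw [epj, eqj]
      exact step_lemma T hc hpj'' hqj'' (ih pj' qj' hpj' hqj')
  intro x
  have e : mp * mq - 1 + 1 = mp * mq := by
    have : 0 < mp * mq := Nat.mul_pos hmp hmq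
    omega
  exact claim (mp * mq - 1) p q (by rw [e]; exact hpm) (by rw [e]; exact hqm) x

end SAut

/-- if a complete and reversible S-automaton generates an infinite semigroup,
then every word is expandable. -/
theorem every_word_expandable_reversible_complete {Q A : Type} [Fintype Q] [Fintype A]
    (T : SAut Q A) (hc : T.Complete) (hrev : T.Reversible)
    (hinf : {f : List A → Option (List A) | ∃ l : List Q, l ≠ [] ∧ f = T.act l}.Infinite)
    (u : List A) :
    ∃ x : List A, (T.orbit u).ncard < (T.orbit (u ++ x)).ncard := by
  classical
  have hmaps : Set.MapsTo (fun f => f u)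
      {f : List A → Option (List A) | ∃ l : List Q, l ≠ [] ∧ f = T.act l}
      (Option.some '' {v : List A | v.length = u.length}) := by
    rintro f ⟨l, -, rfl⟩
    obtain ⟨v, hv, hl⟩ := SAut.act_total T hc l u
    exact ⟨v, hl, hv.symm⟩
  obtain ⟨f, hf, g, hg, hfg, hval⟩ :=
    hinf.exists_ne_map_eq_of_mapsTo hmaps ((List.finite_length_eq A u.length).image _)
  obtain ⟨p, -, rfl⟩ := hf
  obtain ⟨q, -, rfl⟩ := hg
  have hval' : T.act p u = T.act q u := hval
  obtain ⟨p', hp', -⟩ := SAut.dual_total T hc p u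
  obtain ⟨q', hq', -⟩ := SAut.dual_total T hc q u
  have hne : ¬ ∀ x, T.act p' x = T.act q' x := by
    intro hall
    exact hfg (funext (SAut.back_lemma T hc hrev hp' hq' hall))
  push_neg at hne
  obtain ⟨x, hx⟩ := hne
  refine ⟨x, ?_⟩
  obtain ⟨v, hv, hvl⟩ := SAut.act_total T hc p u
  have hv' : T.act q u = some v := by rw [← hval']; exact hv
  obtain ⟨w, hw, -⟩ := SAut.act_total T hc p' x
  obtain ⟨w', hw', -⟩ := SAut.act_total T hc q' x
  have hww : w ≠ w' := by intro e; apply hx; rw [hw, hw', e]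
  have h1 : T.act p (u ++ x) = some (v ++ w) := SAut.act_append' T p hv hp' hw
  have h2 : T.act q (u ++ x) = some (v ++ w') := SAut.act_append' T q hv' hq' hw'
  have hne12 : v ++ w ≠ v ++ w' := fun e => hww (by simpa using e)
  have hv2mem : v ++ w' ∈ T.orbit (u ++ x) := ⟨q, h2⟩
  have hOfin : (T.orbit (u ++ x)).Finite := by
    refine (List.finite_length_eq A (u ++ x).length).subset ?_
    rintro y ⟨l, hl⟩
    exact SAut.act_length T hc hl
  have himg : T.orbit u =
      (fun y => y.take u.length) '' (T.orbit (u ++ x) \ {v ++ w'}) := by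
    ext z
    constructor
    · rintro ⟨l, hl⟩
      obtain ⟨l', hl', -⟩ := SAut.dual_total T hc l u
      obtain ⟨w0, hw0, -⟩ := SAut.act_total T hc l' x
      have hz : T.act l (u ++ x) = some (z ++ w0) := SAut.act_append' T l hl hl' hw0
      have hzl : z.length = u.length := SAut.act_length T hc hl
      by_cases hcase : z ++ w0 = v ++ w'
      · have hzv : z = v := by
          have h3 := congrArg (fun y => y.take u.length) hcase
          simpa [List.take_left' hzl, List.take_left' hvl] using h3
        refine ⟨v ++ w, ⟨⟨p, h1⟩, by simpa using hne12⟩, ?_⟩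
        simp only []
        rw [List.take_left' hvl, hzv]
      · exact ⟨z ++ w0, ⟨⟨l, hz⟩, by simpa using hcase⟩, by simp only []; exact List.take_left' hzl⟩
    · rintro ⟨y, ⟨⟨l, hl⟩, -⟩, rfl⟩
      obtain ⟨z0, hz0, hz0l⟩ := SAut.act_total T hc l u
      obtain ⟨l', hl', -⟩ := SAut.dual_total T hc l u
      obtain ⟨w0, hw0, -⟩ := SAut.act_total T hc l' x
      have hy : y = z0 ++ w0 :=
        Option.some_injective _ (hl.symm.trans (SAut.act_append' T l hz0 hl' hw0))
      exact ⟨l, by simp only []; rw [hy, List.take_left' hz0l]; exact hz0⟩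
  calc (T.orbit u).ncard
      = ((fun y => y.take u.length) '' (T.orbit (u ++ x) \ {v ++ w'})).ncard := by rw [himg]
    _ ≤ (T.orbit (u ++ x) \ {v ++ w'}).ncard :=
        Set.ncard_image_le (hOfin.subset Set.diff_subset)
    _ < (T.orbit (u ++ x)).ncard :=
        Set.ncard_diff_singleton_lt_of_mem hv2mem hOfin
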